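/- arXiv:2307.00177 — 3 statements merged into one kernel-verified Lean document; each statement's English description precedes it below -/
import Mathlib

section
/- Let A → B → C → D be an exact sequence of graded R[t]-modules. If t^(2ε)·A = 0 and t^(2ε)·D = 0, then B and C are 4ε-interleaved: there exist homomorphisms φ : B → C and ψ : C → B, each shifting degree by 4ε, such that ψ ∘ φ equals multiplication by t^(8ε) on B and φ ∘ ψ equals multiplication by t^(8ε) on C. -/
open Polynomial

/-!
Let `s = t^(2ε)`. Exactness gives `s • ker φ = s • im f = 0` and `s • C ⊆ ker g = im φ`, so
`c ↦ s • b` for any `b` with `φ b = s • c` is a well-defined linear map `v : C → B`, and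
`v ∘ (s² φ) = s⁴ = (s² φ) ∘ v`. For the degrees: if `φ b` is homogeneous of degree `j`, then `b`
differs from its degree-`j` component by an element of `ker φ`, so `s • b` is homogeneous of
degree `j + 2ε`; hence both `u = s² φ` and `v` raise degrees by `4ε`.
-/

theorem pow_smul_mem_of_smul_mem {ι S M σ : Type*} [AddMonoid ι] [Monoid S] [MulAction S M]
    [SetLike σ M] (𝒢 : ι → σ) {a : S} {d : ι} (ha : ∀ k, ∀ m ∈ 𝒢 k, a • m ∈ 𝒢 (k + d))
    (n : ℕ) {k : ι} {m : M} (hm : m ∈ 𝒢 k) : a ^ n • m ∈ 𝒢 (k + n • d) := by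
  induction n generalizing k m with
  | zero => simpa using hm
  | succ n ih =>
    rw [pow_succ, mul_smul, succ_nsmul', ← add_assoc]
    exact ih (ha k m hm)

namespace DirectSum

theorem map_decompose {ι M N σ τ F : Type*} [DecidableEq ι] [AddCommMonoid M] [AddCommMonoid N]
    [SetLike σ M] [AddSubmonoidClass σ M] [SetLike τ N] [AddSubmonoidClass τ N]
    [FunLike F M N] [AddMonoidHomClass F M N]
    (ℳ : ι → σ) (𝒩 : ι → τ) [Decomposition ℳ] [Decomposition 𝒩] (f : F)
    (hf : ∀ i, ∀ m ∈ ℳ i, f m ∈ 𝒩 i) (m : M) (i : ι) :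
    f (decompose ℳ m i) = decompose 𝒩 (f m) i := by
  induction m using Decomposition.inductionOn ℳ with
  | zero => simp
  | @homogeneous j m =>
    obtain rfl | hji := eq_or_ne j i
    · rw [decompose_of_mem_same ℳ m.2, decompose_of_mem_same 𝒩 (hf j m m.2)]
    · rw [decompose_of_mem_ne ℳ m.2 hji, decompose_of_mem_ne 𝒩 (hf j m m.2) hji, map_zero]
  | add m m' hm hm' => simp [hm, hm']

end DirectSum

theorem smul_mem_of_map_mem {ι S B C σ τ : Type*} [DecidableEq ι] [Add ι] [Semiring S]
    [AddCommGroup B] [AddCommGroup C] [Module S B] [Module S C]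
    [SetLike σ B] [AddSubgroupClass σ B] [SetLike τ C] [AddSubgroupClass τ C]
    {ℬ : ι → σ} {𝒞 : ι → τ} (hℬ : DirectSum.IsInternal ℬ) (h𝒞 : DirectSum.IsInternal 𝒞)
    {φ : B →ₗ[S] C} (hφ : ∀ i, ∀ b ∈ ℬ i, φ b ∈ 𝒞 i)
    {s : S} {d : ι} (hs : ∀ k, ∀ b ∈ ℬ k, s • b ∈ ℬ (k + d))
    (hker : ∀ b ∈ LinearMap.ker φ, s • b = 0) {b : B} {j : ι} (hb : φ b ∈ 𝒞 j) :
    s • b ∈ ℬ (j + d) := by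
  let _ := hℬ.chooseDecomposition
  let _ := h𝒞.chooseDecomposition
  set bj : B := (DirectSum.decompose ℬ b j : B)
  have hφbj : φ bj = φ b :=
    (DirectSum.map_decompose ℬ 𝒞 φ hφ b j).trans (DirectSum.decompose_of_mem_same 𝒞 hb)
  have hsub : s • (b - bj) = 0 := hker _ (by simp [hφbj])
  rw [← sub_add_cancel b bj, smul_add, hsub, zero_add]
  exact hs j bj (DirectSum.decompose ℬ b j).2

namespace LinearMap

section Exact

variable {S A B C : Type*} [Semiring S] [AddCommMonoid A] [AddCommMonoid B] [AddCommMonoid C]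
  [Module S A] [Module S B] [Module S C] {s : S}

theorem smul_eq_zero_of_mem_ker {f : A →ₗ[S] B} {φ : B →ₗ[S] C} (hex : range f = ker φ)
    (hA : ∀ a : A, s • a = 0) {b : B} (hb : b ∈ ker φ) : s • b = 0 := by
  rw [← hex] at hb
  obtain ⟨a, rfl⟩ := hb
  rw [← map_smul, hA, map_zero]

theorem smul_mem_range_of_exact {φ : A →ₗ[S] B} {g : B →ₗ[S] C} (hex : range φ = ker g)
    (hC : ∀ c : C, s • c = 0) (b : B) : s • b ∈ range φ := by
  rw [hex, mem_ker, map_smul, hC]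

end Exact

section InverseUpToSmul

variable {S M N : Type*} [CommRing S] [AddCommGroup M] [AddCommGroup N] [Module S M] [Module S N]

def IsInverseUpToSmul (φ : M →ₗ[S] N) (v : N →ₗ[S] M) (s : S) : Prop :=
  ∀ n m, φ m = s • n → v n = s • m

theorem exists_isInverseUpToSmul (φ : M →ₗ[S] N) (s : S)
    (hker : ∀ m ∈ ker φ, s • m = 0) (hrange : ∀ n, s • n ∈ range φ) :
    ∃ v : N →ₗ[S] M, IsInverseUpToSmul φ v s := by
  have hle : ker φ ≤ ker (s • LinearMap.id) := hker
  let smulIntoRange : N →ₗ[S] range φ := codRestrict _ (s • LinearMap.id) hrange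
  refine ⟨(ker φ).liftQ _ hle ∘ₗ φ.quotKerEquivRange.symm.toLinearMap ∘ₗ smulIntoRange,
    fun n m hm => ?_⟩
  have hmk : φ.quotKerEquivRange.symm (smulIntoRange n) = Submodule.Quotient.mk m := by
    rw [LinearEquiv.symm_apply_eq]
    exact Subtype.ext hm.symm
  simp [hmk]

namespace IsInverseUpToSmul

variable {φ : M →ₗ[S] N} {v : N →ₗ[S] M} {s : S}

theorem apply_sq_smul_map (hv : IsInverseUpToSmul φ v s) (m : M) :
    v (s ^ 2 • φ m) = s ^ 4 • m := by
  rw [hv _ (s ^ 3 • m) (by rw [map_smul, smul_smul]; ring_nf), smul_smul]; ring_nf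

theorem sq_smul_map_apply (hv : IsInverseUpToSmul φ v s) (hrange : ∀ n, s • n ∈ range φ)
    (n : N) : s ^ 2 • φ (v n) = s ^ 4 • n := by
  obtain ⟨m, hm⟩ := hrange n
  rw [hv n m hm, map_smul, hm, smul_smul, smul_smul]; ring_nf

end IsInverseUpToSmul

end InverseUpToSmul

end LinearMap

theorem stmt_6_general {R : Type} [CommRing R]
    {A B C' D : Type} [AddCommGroup A] [AddCommGroup B] [AddCommGroup C'] [AddCommGroup D]
    [Module (Polynomial R) A] [Module (Polynomial R) B]
    [Module (Polynomial R) C'] [Module (Polynomial R) D]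
    (ℬ : ℤ → AddSubgroup B)
    (𝒞 : ℤ → AddSubgroup C')
    (hBint : DirectSum.IsInternal ℬ)
    (hCint : DirectSum.IsInternal 𝒞)
    (hBX : ∀ (k : ℤ), ∀ b ∈ ℬ k, (X : Polynomial R) • b ∈ ℬ (k + 1))
    (hCX : ∀ (k : ℤ), ∀ c ∈ 𝒞 k, (X : Polynomial R) • c ∈ 𝒞 (k + 1))
    (f : A →ₗ[Polynomial R] B) (φ : B →ₗ[Polynomial R] C') (g : C' →ₗ[Polynomial R] D)
    (hφg : ∀ (k : ℤ), ∀ b ∈ ℬ k, φ b ∈ 𝒞 k)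
    (hexB : LinearMap.range f = LinearMap.ker φ)
    (hexC : LinearMap.range φ = LinearMap.ker g)
    (ε : ℕ)
    (hA : ∀ a : A, (X ^ (2 * ε) : Polynomial R) • a = 0)
    (hD : ∀ d : D, (X ^ (2 * ε) : Polynomial R) • d = 0) :
    ∃ (u : B →ₗ[Polynomial R] C') (v : C' →ₗ[Polynomial R] B),
      (∀ (k : ℤ), ∀ b ∈ ℬ k, u b ∈ 𝒞 (k + 4 * (ε : ℤ))) ∧
      (∀ (k : ℤ), ∀ c ∈ 𝒞 k, v c ∈ ℬ (k + 4 * (ε : ℤ))) ∧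
      (∀ b : B, v (u b) = (X ^ (8 * ε) : Polynomial R) • b) ∧
      (∀ c : C', u (v c) = (X ^ (8 * ε) : Polynomial R) • c) := by
  have hker (b) (hb : b ∈ LinearMap.ker φ) := LinearMap.smul_eq_zero_of_mem_ker hexB hA hb
  have hrange := LinearMap.smul_mem_range_of_exact hexC hD
  have hBs (k) (b) (hb : b ∈ ℬ k) : (X ^ (2 * ε) : R[X]) • b ∈ ℬ (k + 2 * ε) := by
    simpa using pow_smul_mem_of_smul_mem ℬ hBX (2 * ε) hb
  have hCs (n : ℕ) (k) (c) (hc : c ∈ 𝒞 k) : (X ^ n : R[X]) • c ∈ 𝒞 (k + (n : ℤ)) := by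
    simpa using pow_smul_mem_of_smul_mem 𝒞 hCX n hc
  have hsq : (X ^ (2 * ε) : R[X]) ^ 2 = X ^ (4 * ε) := by rw [← pow_mul]; ring_nf
  have hfourth : (X ^ (2 * ε) : R[X]) ^ 4 = X ^ (8 * ε) := by rw [← pow_mul]; ring_nf
  obtain ⟨v, hv⟩ := φ.exists_isInverseUpToSmul _ hker hrange
  refine ⟨(X ^ (2 * ε) : R[X]) ^ 2 • φ, v, fun k b hb => ?_, fun k c hc => ?_,
    fun b => ?_, fun c => ?_⟩
  · simpa [hsq] using hCs (4 * ε) k _ (hφg k b hb)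
  · obtain ⟨b, hb⟩ := hrange c
    have hφb : φ b ∈ 𝒞 (k + 2 * ε) := by simpa [← hb] using hCs (2 * ε) k c hc
    rw [hv c b hb]
    convert smul_mem_of_map_mem hBint hCint hφg hBs hker hφb using 2
    ring
  · simpa [hfourth] using hv.apply_sq_smul_map b
  · simpa [hfourth] using hv.sq_smul_map_apply hrange c

/-- Let `A → B → C → D` be an exact sequence of graded `R[t]`-modules.
If `t^(2ε) • A = 0` and `t^(2ε) • D = 0`, then `B` and `C` are `4ε`-interleaved:
there are homomorphisms `φ : B → C` and `ψ : C → B`, each shifting degree by `4ε`,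
with `ψ ∘ φ` equal to multiplication by `t^(8ε)` on `B` and `φ ∘ ψ` equal to
multiplication by `t^(8ε)` on `C`. -/
theorem stmt_6 {R : Type} [CommRing R]
    {A B C' D : Type} [AddCommGroup A] [AddCommGroup B] [AddCommGroup C'] [AddCommGroup D]
    [Module (Polynomial R) A] [Module (Polynomial R) B]
    [Module (Polynomial R) C'] [Module (Polynomial R) D]
    (𝒜 : ℤ → AddSubgroup A) (ℬ : ℤ → AddSubgroup B)
    (𝒞 : ℤ → AddSubgroup C') (𝒟 : ℤ → AddSubgroup D)
    (hAint : DirectSum.IsInternal 𝒜) (hBint : DirectSum.IsInternal ℬ)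
    (hCint : DirectSum.IsInternal 𝒞) (hDint : DirectSum.IsInternal 𝒟)
    (hAC : ∀ (r : R) (k : ℤ), ∀ a ∈ 𝒜 k, (C r : Polynomial R) • a ∈ 𝒜 k)
    (hBC : ∀ (r : R) (k : ℤ), ∀ b ∈ ℬ k, (C r : Polynomial R) • b ∈ ℬ k)
    (hCC : ∀ (r : R) (k : ℤ), ∀ c ∈ 𝒞 k, (C r : Polynomial R) • c ∈ 𝒞 k)
    (hDC : ∀ (r : R) (k : ℤ), ∀ d ∈ 𝒟 k, (C r : Polynomial R) • d ∈ 𝒟 k)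
    (hAX : ∀ (k : ℤ), ∀ a ∈ 𝒜 k, (X : Polynomial R) • a ∈ 𝒜 (k + 1))
    (hBX : ∀ (k : ℤ), ∀ b ∈ ℬ k, (X : Polynomial R) • b ∈ ℬ (k + 1))
    (hCX : ∀ (k : ℤ), ∀ c ∈ 𝒞 k, (X : Polynomial R) • c ∈ 𝒞 (k + 1))
    (hDX : ∀ (k : ℤ), ∀ d ∈ 𝒟 k, (X : Polynomial R) • d ∈ 𝒟 (k + 1))
    (f : A →ₗ[Polynomial R] B) (φ : B →ₗ[Polynomial R] C') (g : C' →ₗ[Polynomial R] D)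
    (hfg : ∀ (k : ℤ), ∀ a ∈ 𝒜 k, f a ∈ ℬ k)
    (hφg : ∀ (k : ℤ), ∀ b ∈ ℬ k, φ b ∈ 𝒞 k)
    (hgg : ∀ (k : ℤ), ∀ c ∈ 𝒞 k, g c ∈ 𝒟 k)
    (hexB : LinearMap.range f = LinearMap.ker φ)
    (hexC : LinearMap.range φ = LinearMap.ker g)
    (ε : ℕ)
    (hA : ∀ a : A, (X ^ (2 * ε) : Polynomial R) • a = 0)
    (hD : ∀ d : D, (X ^ (2 * ε) : Polynomial R) • d = 0) :
    ∃ (u : B →ₗ[Polynomial R] C') (v : C' →ₗ[Polynomial R] B),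
      (∀ (k : ℤ), ∀ b ∈ ℬ k, u b ∈ 𝒞 (k + 4 * (ε : ℤ))) ∧
      (∀ (k : ℤ), ∀ c ∈ 𝒞 k, v c ∈ ℬ (k + 4 * (ε : ℤ))) ∧
      (∀ b : B, v (u b) = (X ^ (8 * ε) : Polynomial R) • b) ∧
      (∀ c : C', u (v c) = (X ^ (8 * ε) : Polynomial R) • c) :=
  stmt_6_general ℬ 𝒞 hBint hCint hBX hCX f φ g hφg hexB hexC ε hA hD
end

section
/- Persistent order extension principle: let I be a linearly ordered set and X : I → Pos a functor (a persistence poset, i.e., a family of posets X_i with monotone structure maps φ_{ij} : X_i → X_j for i ≤ j satisfying φ_{ii} = id and φ_{jk} ∘ φ_{ij} = φ_{ik}). Then there exists a family of linear orders on the underlying sets of the X_i, each extending the original partial order, such that every structure map φ_{ij} remains monotone with respect to these linear orders. -/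
/-!
Among all families of partial orders on the `X i` that refine the given ones and keep every
structure map monotone, Zorn's lemma gives a maximal one. It is total: if `a, b ∈ X i₀` are
incomparable, then, because `I` is linear, one of the two orientations, say `a ≤ b`, is never
reversed strictly by a structure map, and adjoining `x ≤ φ a`, `φ b ≤ y` at every `j ≥ i₀`
yields a strictly larger family of the same kind.
-/

namespace PersistenceOrder

variable {I : Type*} {X : I → Type*}

section Preorder

variable [Preorder I] (φ : ∀ i j, i ≤ j → X i → X j)

structure IsMonotoneOrderFamily (r : ∀ i, X i → X i → Prop) : Prop where
  refl : ∀ i x, r i x x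
  trans : ∀ i x y z, r i x y → r i y z → r i x z
  antisymm : ∀ i x y, r i x y → r i y x → x = y
  map : ∀ i j (h : i ≤ j) x y, r i x y → r j (φ i j h x) (φ i j h y)

theorem IsMonotoneOrderFamily.chain_union {c : Set (∀ i, X i → X i → Prop)}
    (hc : IsChain (· ≤ ·) c) (hne : c.Nonempty) (hcφ : ∀ r ∈ c, IsMonotoneOrderFamily φ r) :
    IsMonotoneOrderFamily φ fun i x y => ∃ r ∈ c, r i x y := by
  obtain ⟨r₀, hr₀⟩ := hne
  refine ⟨fun i x => ⟨r₀, hr₀, (hcφ r₀ hr₀).refl i x⟩, ?_, ?_, ?_⟩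
  · rintro i x y z ⟨r, hr, hxy⟩ ⟨r', hr', hyz⟩
    rcases hc.total hr hr' with hle | hle
    · exact ⟨r', hr', (hcφ r' hr').trans i x y z (hle i x y hxy) hyz⟩
    · exact ⟨r, hr, (hcφ r hr).trans i x y z hxy (hle i y z hyz)⟩
  · rintro i x y ⟨r, hr, hxy⟩ ⟨r', hr', hyx⟩
    rcases hc.total hr hr' with hle | hle
    · exact (hcφ r' hr').antisymm i x y (hle i x y hxy) hyx
    · exact (hcφ r hr).antisymm i x y hxy (hle i y x hyx)
  · rintro i j h x y ⟨r, hr, hxy⟩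
    exact ⟨r, hr, (hcφ r hr).map i j h x y hxy⟩

theorem exists_maximal_isMonotoneOrderFamily_ge {r₀ : ∀ i, X i → X i → Prop}
    (h₀ : IsMonotoneOrderFamily φ r₀) :
    ∃ r, r₀ ≤ r ∧ Maximal (IsMonotoneOrderFamily φ) r := by
  refine zorn_le_nonempty₀ {r | IsMonotoneOrderFamily φ r} (fun c hcφ hc r hr => ?_) r₀ h₀
  exact ⟨_, .chain_union φ hc ⟨r, hr⟩ hcφ, fun r' hr' i x y hxy => ⟨r', hr', hxy⟩⟩

/-- `r` with `a ≤ b` adjoined at `i₀` and transported along the structure maps. -/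
def insertLE (r : ∀ i, X i → X i → Prop) {i₀ : I} (a b : X i₀) (j : I) (x y : X j) : Prop :=
  r j x y ∨ ∃ h : i₀ ≤ j, r j x (φ i₀ j h a) ∧ r j (φ i₀ j h b) y

/-- `a ≤ b` may be adjoined at `i₀` when no structure map sends `b` strictly below `a`. -/
def CanInsertLE (r : ∀ i, X i → X i → Prop) {i₀ : I} (a b : X i₀) : Prop :=
  ∀ j (h : i₀ ≤ j), r j (φ i₀ j h b) (φ i₀ j h a) → r j (φ i₀ j h a) (φ i₀ j h b)

variable {φ}

theorem le_insertLE (r : ∀ i, X i → X i → Prop) {i₀ : I} (a b : X i₀) :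
    r ≤ insertLE φ r a b :=
  fun _ _ _ => Or.inl

theorem insertLE_self (hid : ∀ i (a : X i), φ i i le_rfl a = a) {r : ∀ i, X i → X i → Prop}
    (hr : IsMonotoneOrderFamily φ r) {i₀ : I} (a b : X i₀) : insertLE φ r a b i₀ a b :=
  Or.inr ⟨le_rfl, by rw [hid]; exact hr.refl _ _, by rw [hid]; exact hr.refl _ _⟩

theorem IsMonotoneOrderFamily.insertLE
    (hcomp : ∀ i j k (hij : i ≤ j) (hjk : j ≤ k) (a : X i),
      φ j k hjk (φ i j hij a) = φ i k (hij.trans hjk) a)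
    {r : ∀ i, X i → X i → Prop} (hr : IsMonotoneOrderFamily φ r) {i₀ : I} {a b : X i₀}
    (hab : CanInsertLE φ r a b) : IsMonotoneOrderFamily φ (insertLE φ r a b) := by
  have htr := hr.trans
  have hba : ∀ j (h : i₀ ≤ j) y, r j (φ i₀ j h b) y → r j y (φ i₀ j h a) →
      r j (φ i₀ j h a) (φ i₀ j h b) := fun j h y hby hya => hab j h (htr _ _ _ _ hby hya)
  refine ⟨fun i x => Or.inl (hr.refl i x), ?_, ?_, ?_⟩
  · rintro i x y z (hxy | ⟨h, hxa, hby⟩) (hyz | ⟨h', hya, hbz⟩)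
    · exact Or.inl (htr _ _ _ _ hxy hyz)
    · exact Or.inr ⟨h', htr _ _ _ _ hxy hya, hbz⟩
    · exact Or.inr ⟨h, hxa, htr _ _ _ _ hby hyz⟩
    · exact Or.inl (htr _ _ _ _ hxa (htr _ _ _ _ (hba i h y hby hya) hbz))
  · rintro i x y (hxy | ⟨h, hxa, hby⟩) (hyx | ⟨h', hya, hbx⟩)
    · exact hr.antisymm _ _ _ hxy hyx
    · have hφab := hba i h' _ hbx (htr _ _ _ _ hxy hya)
      exact hr.antisymm _ _ _ hxy (htr _ _ _ _ hya (htr _ _ _ _ hφab hbx))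
    · have hφab := hba i h _ hby (htr _ _ _ _ hyx hxa)
      exact hr.antisymm _ _ _ (htr _ _ _ _ hxa (htr _ _ _ _ hφab hby)) hyx
    · have hφab := hba i h y hby hya
      exact hr.antisymm _ _ _ (htr _ _ _ _ hxa (htr _ _ _ _ hφab hby))
        (htr _ _ _ _ hya (htr _ _ _ _ hφab hbx))
  · rintro i j hij x y (hxy | ⟨h, hxa, hby⟩)
    · exact Or.inl (hr.map _ _ _ _ _ hxy)
    · refine Or.inr ⟨h.trans hij, ?_, ?_⟩
      · simpa only [hcomp] using hr.map _ _ hij _ _ hxa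
      · simpa only [hcomp] using hr.map _ _ hij _ _ hby

end Preorder

section LinearOrder

variable [LinearOrder I] {φ : ∀ i j, i ≤ j → X i → X j}

theorem IsMonotoneOrderFamily.canInsertLE_or_canInsertLE
    (hcomp : ∀ i j k (hij : i ≤ j) (hjk : j ≤ k) (a : X i),
      φ j k hjk (φ i j hij a) = φ i k (hij.trans hjk) a)
    {r : ∀ i, X i → X i → Prop} (hr : IsMonotoneOrderFamily φ r) {i₀ : I} (a b : X i₀) :
    CanInsertLE φ r a b ∨ CanInsertLE φ r b a := by
  refine or_iff_not_imp_left.2 fun hab k hk hk_ab => ?_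
  obtain ⟨j, hj, hj_ba, hj_ab⟩ : ∃ j, ∃ h : i₀ ≤ j,
      r j (φ i₀ j h b) (φ i₀ j h a) ∧ ¬ r j (φ i₀ j h a) (φ i₀ j h b) := by
    simpa [CanInsertLE] using hab
  rcases le_total j k with hjk | hkj
  · simpa only [hcomp] using hr.map j k hjk _ _ hj_ba
  · exact absurd (by simpa only [hcomp] using hr.map k j hkj _ _ hk_ab) hj_ab

theorem total_of_maximal_isMonotoneOrderFamily
    (hid : ∀ i (a : X i), φ i i le_rfl a = a)
    (hcomp : ∀ i j k (hij : i ≤ j) (hjk : j ≤ k) (a : X i),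
      φ j k hjk (φ i j hij a) = φ i k (hij.trans hjk) a)
    {r : ∀ i, X i → X i → Prop} (hr : Maximal (IsMonotoneOrderFamily φ) r) (i : I) (a b : X i) :
    r i a b ∨ r i b a := by
  have key : ∀ a b : X i, CanInsertLE φ r a b → r i a b := fun a b hab =>
    hr.2 (hr.1.insertLE hcomp hab) (le_insertLE r a b) i a b (insertLE_self hid hr.1 a b)
  exact (hr.1.canInsertLE_or_canInsertLE hcomp a b).imp (key a b) (key b a)

end LinearOrder

end PersistenceOrder

open PersistenceOrder in
/-- Persistent order extension principle.  Let `I` be a linearly ordered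
set and `X : I → Pos` a persistence poset: a family of posets `X i` with monotone
structure maps `φ i j : X i → X j` for `i ≤ j` satisfying `φ i i = id` and
`φ j k ∘ φ i j = φ i k`.  Then there is a family of linear orders on the `X i`, each
extending the original partial order, with respect to which every structure map is
still monotone. -/
theorem stmt_11 {I : Type} [LinearOrder I]
    (X : I → Type) (P : ∀ i, PartialOrder (X i))
    (φ : ∀ i j, i ≤ j → X i → X j)
    (hmono : ∀ i j (h : i ≤ j) (a b : X i), (P i).le a b → (P j).le (φ i j h a) (φ i j h b))
    (hid : ∀ i (a : X i), φ i i le_rfl a = a)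
    (hcomp : ∀ i j k (hij : i ≤ j) (hjk : j ≤ k) (a : X i),
      φ j k hjk (φ i j hij a) = φ i k (hij.trans hjk) a) :
    ∃ L : ∀ i, LinearOrder (X i),
      (∀ i (a b : X i), (P i).le a b → (L i).le a b) ∧
      (∀ i j (h : i ≤ j) (a b : X i), (L i).le a b → (L j).le (φ i j h a) (φ i j h b)) := by
  have hP : IsMonotoneOrderFamily φ fun i => (P i).le :=
    ⟨fun i => (P i).le_refl, fun i => (P i).le_trans, fun i => (P i).le_antisymm, hmono⟩
  obtain ⟨r, hPr, hr⟩ := exists_maximal_isMonotoneOrderFamily_ge φ hP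
  refine ⟨fun i =>
    { le := r i
      lt := fun x y => r i x y ∧ ¬ r i y x
      le_refl := hr.1.refl i
      le_trans := hr.1.trans i
      lt_iff_le_not_ge := fun _ _ => Iff.rfl
      le_antisymm := hr.1.antisymm i
      le_total := total_of_maximal_isMonotoneOrderFamily hid hcomp hr i
      toDecidableLE := Classical.decRel _ }, hPr, hr.1.map⟩
end

section
/- Left propagation of linear extension: let X be a persistence poset indexed by a converse well-founded linear order I, and suppose there is a maximal index i such that X_j is empty for all j > i. Then X admits a linear extension, i.e., compatible linear refinements of all component orders under which all structure maps remain monotone. -/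
/-!
The orders are built downwards, by well-founded recursion on `>`. At level `i`, once linear
orders on all later components are known and compatible, declare `a ≤ b` in `X i` when
`a ≤ b` already holds there or when `φ i j a < φ i j b` at some later `j`. This relation is a
partial order, and any Szpilrajn extension of it keeps `φ i j` monotone: if `φ i j b < φ i j a`
then `b ≤ a` is forced, so `a ≤ b` only happens for `a = b`.
-/

theorem exists_linearOrder_le_of_isPartialOrder {α : Type*} (r : α → α → Prop)
    [IsPartialOrder α r] : ∃ L : LinearOrder α, ∀ a b, r a b → L.le a b := by
  let _ : PartialOrder α :=
    { le := r, le_refl := refl_of r, le_trans := fun _ _ _ => _root_.trans_of r,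
      le_antisymm := fun _ _ => antisymm_of r }
  exact ⟨(inferInstance : LinearOrder (LinearExtension α)),
    fun _ _ h => toLinearExtension.monotone h⟩

instance (α : Type*) : Nonempty (LinearOrder α) := (exists_wellFoundedLT α).nonempty

namespace PersistencePoset

variable {I : Type*} [LinearOrder I] {X : I → Type*}
  (P : ∀ i, PartialOrder (X i)) (φ : ∀ i j, i ≤ j → X i → X j)

def StrictAbove (i : I) (L : ∀ j, i < j → LinearOrder (X j)) (a b : X i) : Prop :=
  ∃ j, ∃ h : i < j, (L j h).lt (φ i j h.le a) (φ i j h.le b)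

def stepRel (i : I) (L : ∀ j, i < j → LinearOrder (X j)) (a b : X i) : Prop :=
  (P i).le a b ∨ StrictAbove φ i L a b

section Step

variable {P φ} {i : I} {L : ∀ j, i < j → LinearOrder (X j)}

theorem not_strictAbove_self (a : X i) : ¬ StrictAbove φ i L a a :=
  fun ⟨j, _, h⟩ => @lt_irrefl _ (L j _).toPreorder _ h

theorem StrictAbove.trans
    (hcomp : ∀ i j k (hij : i ≤ j) (hjk : j ≤ k) (a : X i),
      φ j k hjk (φ i j hij a) = φ i k (hij.trans hjk) a)
    (hL : ∀ j k (hj : i < j) (hk : i < k) (hjk : j < k) (x y : X j),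
      (L j hj).le x y → (L k hk).le (φ j k hjk.le x) (φ j k hjk.le y))
    {a b c : X i} :
    StrictAbove φ i L a b → StrictAbove φ i L b c → StrictAbove φ i L a c := by
  rintro ⟨j, hj, hab⟩ ⟨k, hk, hbc⟩
  rcases lt_trichotomy j k with hjk | rfl | hkj
  · have hab' := hL j k hj hk hjk _ _ (@le_of_lt _ (L j hj).toPreorder _ _ hab)
    rw [hcomp, hcomp] at hab'
    exact ⟨k, hk, @lt_of_le_of_lt _ (L k hk).toPreorder _ _ _ hab' hbc⟩
  · exact ⟨j, hj, @lt_trans _ (L j hj).toPreorder _ _ _ hab hbc⟩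
  · have hbc' := hL k j hk hj hkj _ _ (@le_of_lt _ (L k hk).toPreorder _ _ hbc)
    rw [hcomp, hcomp] at hbc'
    exact ⟨j, hj, @lt_of_lt_of_le _ (L j hj).toPreorder _ _ _ hab hbc'⟩

theorem strictAbove_of_strictAbove_of_le
    (hmono : ∀ i j (h : i ≤ j) (a b : X i), (P i).le a b → (P j).le (φ i j h a) (φ i j h b))
    (hP : ∀ j (hj : i < j) (x y : X j), (P j).le x y → (L j hj).le x y)
    {a b c : X i} : StrictAbove φ i L a b → (P i).le b c → StrictAbove φ i L a c :=
  fun ⟨j, hj, hab⟩ hbc =>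
    ⟨j, hj, @lt_of_lt_of_le _ (L j hj).toPreorder _ _ _ hab (hP j hj _ _ (hmono i j _ b c hbc))⟩

theorem strictAbove_of_le_of_strictAbove
    (hmono : ∀ i j (h : i ≤ j) (a b : X i), (P i).le a b → (P j).le (φ i j h a) (φ i j h b))
    (hP : ∀ j (hj : i < j) (x y : X j), (P j).le x y → (L j hj).le x y)
    {a b c : X i} : (P i).le a b → StrictAbove φ i L b c → StrictAbove φ i L a c :=
  fun hab ⟨j, hj, hbc⟩ =>
    ⟨j, hj, @lt_of_le_of_lt _ (L j hj).toPreorder _ _ _ (hP j hj _ _ (hmono i j _ a b hab)) hbc⟩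

theorem isPartialOrder_stepRel
    (hmono : ∀ i j (h : i ≤ j) (a b : X i), (P i).le a b → (P j).le (φ i j h a) (φ i j h b))
    (hcomp : ∀ i j k (hij : i ≤ j) (hjk : j ≤ k) (a : X i),
      φ j k hjk (φ i j hij a) = φ i k (hij.trans hjk) a)
    (hP : ∀ j (hj : i < j) (x y : X j), (P j).le x y → (L j hj).le x y)
    (hL : ∀ j k (hj : i < j) (hk : i < k) (hjk : j < k) (x y : X j),
      (L j hj).le x y → (L k hk).le (φ j k hjk.le x) (φ j k hjk.le y)) :
    IsPartialOrder (X i) (stepRel P φ i L) where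
  refl a := Or.inl (@le_refl _ (P i).toPreorder a)
  trans a b c := by
    rintro (hab | hab) (hbc | hbc)
    · exact Or.inl (@le_trans _ (P i).toPreorder _ _ _ hab hbc)
    · exact Or.inr (strictAbove_of_le_of_strictAbove hmono hP hab hbc)
    · exact Or.inr (strictAbove_of_strictAbove_of_le hmono hP hab hbc)
    · exact Or.inr (hab.trans hcomp hL hbc)
  antisymm a b := by
    rintro (hab | hab) (hba | hba)
    · exact @le_antisymm _ (P i) _ _ hab hba
    · exact (not_strictAbove_self b (strictAbove_of_strictAbove_of_le hmono hP hba hab)).elim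
    · exact (not_strictAbove_self a (strictAbove_of_strictAbove_of_le hmono hP hab hba)).elim
    · exact (not_strictAbove_self a (hab.trans hcomp hL hba)).elim

end Step

variable [WellFoundedGT I]

/-- An arbitrary linear order unless `stepRel P φ i L` is a partial order; the induction in
`isPartialOrder_stepRel_linearExtension` shows that it always is. -/
@[reducible] noncomputable def extendStep (i : I) (L : ∀ j, i < j → LinearOrder (X j)) :
    LinearOrder (X i) :=
  Classical.epsilon fun M : LinearOrder (X i) => ∀ a b, stepRel P φ i L a b → M.le a b

@[reducible] noncomputable def linearExtension : ∀ i, LinearOrder (X i) :=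
  wellFounded_gt.fix (extendStep P φ)

theorem linearExtension_eq (i : I) :
    linearExtension P φ i = extendStep P φ i (fun j _ => linearExtension P φ j) :=
  wellFounded_gt.fix_eq _ i

variable {P φ} {i : I}

theorem linearExtension_le_of_stepRel
    (h : IsPartialOrder (X i) (stepRel P φ i fun j _ => linearExtension P φ j)) {a b : X i}
    (hab : stepRel P φ i (fun j _ => linearExtension P φ j) a b) :
    (linearExtension P φ i).le a b := by
  rw [linearExtension_eq]
  exact Classical.epsilon_spec (exists_linearOrder_le_of_isPartialOrder _) a b hab

theorem linearExtension_map_le_map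
    (h : IsPartialOrder (X i) (stepRel P φ i fun j _ => linearExtension P φ j))
    {j : I} (hij : i < j) {a b : X i} (hab : (linearExtension P φ i).le a b) :
    (linearExtension P φ j).le (φ i j hij.le a) (φ i j hij.le b) := by
  by_contra hab'
  have hba : (linearExtension P φ i).le b a :=
    linearExtension_le_of_stepRel h
      (Or.inr ⟨j, hij, @lt_of_not_ge _ (linearExtension P φ j) _ _ hab'⟩)
  obtain rfl := @le_antisymm _ (linearExtension P φ i).toPartialOrder _ _ hab hba
  exact hab' (@le_refl _ (linearExtension P φ j).toPreorder _)

theorem isPartialOrder_stepRel_linearExtension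
    (hmono : ∀ i j (h : i ≤ j) (a b : X i), (P i).le a b → (P j).le (φ i j h a) (φ i j h b))
    (hcomp : ∀ i j k (hij : i ≤ j) (hjk : j ≤ k) (a : X i),
      φ j k hjk (φ i j hij a) = φ i k (hij.trans hjk) a)
    (i : I) : IsPartialOrder (X i) (stepRel P φ i fun j _ => linearExtension P φ j) := by
  induction i using WellFoundedGT.induction with
  | _ i ih =>
  exact isPartialOrder_stepRel hmono hcomp
    (fun j hj _ _ hxy => linearExtension_le_of_stepRel (ih j hj) (Or.inl hxy))
    (fun j _ hj _ hjk _ _ => linearExtension_map_le_map (ih j hj) hjk)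

end PersistencePoset

theorem stmt_13_general {I : Type} [LinearOrder I] [WellFoundedGT I]
    (X : I → Type) (P : ∀ i, PartialOrder (X i))
    (φ : ∀ i j, i ≤ j → X i → X j)
    (hmono : ∀ i j (h : i ≤ j) (a b : X i), (P i).le a b → (P j).le (φ i j h a) (φ i j h b))
    (hid : ∀ i (a : X i), φ i i le_rfl a = a)
    (hcomp : ∀ i j k (hij : i ≤ j) (hjk : j ≤ k) (a : X i),
      φ j k hjk (φ i j hij a) = φ i k (hij.trans hjk) a) :
    ∃ L : ∀ i, LinearOrder (X i),
      (∀ i (a b : X i), (P i).le a b → (L i).le a b) ∧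
      (∀ i j (h : i ≤ j) (a b : X i), (L i).le a b → (L j).le (φ i j h a) (φ i j h b)) := by
  have hpo := PersistencePoset.isPartialOrder_stepRel_linearExtension hmono hcomp
  refine ⟨PersistencePoset.linearExtension P φ,
    fun i a b hab => PersistencePoset.linearExtension_le_of_stepRel (hpo i) (Or.inl hab),
    fun i j hij a b hab => ?_⟩
  rcases hij.eq_or_lt with rfl | hij
  · rwa [hid, hid]
  · exact PersistencePoset.linearExtension_map_le_map (hpo i) hij hab

/-- Left propagation of linear extension.  Let `X` be a persistence
poset indexed by a converse well-founded linear order `I` (every nonempty subset of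
`I` has a maximal element, i.e. `>` is well-founded), and suppose there is an index
`i₀` such that `X j` is empty for all `j > i₀`.  Then `X` admits a linear extension:
compatible linear refinements of the component orders under which all structure maps
remain monotone. -/
theorem stmt_13 {I : Type} [LinearOrder I] [WellFoundedGT I]
    (X : I → Type) (P : ∀ i, PartialOrder (X i))
    (φ : ∀ i j, i ≤ j → X i → X j)
    (hmono : ∀ i j (h : i ≤ j) (a b : X i), (P i).le a b → (P j).le (φ i j h a) (φ i j h b))
    (hid : ∀ i (a : X i), φ i i le_rfl a = a)
    (hcomp : ∀ i j k (hij : i ≤ j) (hjk : j ≤ k) (a : X i),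
      φ j k hjk (φ i j hij a) = φ i k (hij.trans hjk) a)
    (i₀ : I) (hempty : ∀ j, i₀ < j → IsEmpty (X j)) :
    ∃ L : ∀ i, LinearOrder (X i),
      (∀ i (a b : X i), (P i).le a b → (L i).le a b) ∧
      (∀ i j (h : i ≤ j) (a b : X i), (L i).le a b → (L j).le (φ i j h a) (φ i j h b)) :=
  stmt_13_general X P φ hmono hid hcomp
end
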